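/- arXiv:2506.08673 — 7 statements merged into one kernel-verified Lean document; each statement's English description precedes it below -/
import Mathlib

section
/- Let p ≥ 2 be an integer and let α₁, …, α_t ∈ {1, …, p} (with t ≥ 1). Let s = (∑_{i=1}^t α_i) mod p. Then ∑_{i=1}^t α_i (p − α_i) ≥ s (p − s). -/
/-- Writing `a' = p - a` and `b' = p - b`, a wrap-around `a + b ≥ p` turns the inequality into
`(p - a' - b')(a' + b') ≤ a'(p - a') + b'(p - b')`, so in both cases the defect is a product of
nonnegative numbers. -/
lemma Int.emod_add_mul_sub_emod_le (p a b : ℤ) (ha₀ : 0 ≤ a) (hap : a < p)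
    (hb₀ : 0 ≤ b) (hbp : b ≤ p) :
    (a + b) % p * (p - (a + b) % p) ≤ a * (p - a) + b * (p - b) := by
  rcases lt_or_ge (a + b) p with hlt | hge
  · rw [Int.emod_eq_of_lt (by positivity) hlt]
    nlinarith [mul_nonneg ha₀ hb₀]
  · rw [Int.emod_eq_sub_self_emod, Int.emod_eq_of_lt (by linarith) (by linarith)]
    nlinarith [mul_nonneg (sub_nonneg.2 hap.le) (sub_nonneg.2 hbp)]

lemma Finset.sum_emod_mul_sub_emod_le {ι : Type*} (p : ℤ) (hp : 0 < p) (s : Finset ι)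
    (α : ι → ℤ) (hα : ∀ i ∈ s, 0 ≤ α i ∧ α i ≤ p) :
    (∑ i ∈ s, α i) % p * (p - (∑ i ∈ s, α i) % p) ≤ ∑ i ∈ s, α i * (p - α i) := by
  classical
  induction s using Finset.induction_on with
  | empty => simp
  | insert j s hj ih =>
    rw [sum_insert hj, sum_insert hj, add_comm (α j), ← Int.emod_add_emod, add_comm (α j * _)]
    obtain ⟨hj₀, hjp⟩ := hα j (mem_insert_self j s)
    calc _ ≤ (∑ i ∈ s, α i) % p * (p - (∑ i ∈ s, α i) % p) + α j * (p - α j) :=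
          Int.emod_add_mul_sub_emod_le p _ _ (Int.emod_nonneg _ hp.ne') (Int.emod_lt_of_pos _ hp)
            hj₀ hjp
      _ ≤ _ := by
          gcongr
          exact ih fun i hi ↦ hα i (mem_insert_of_mem hi)

theorem stmt_0_general (p : ℤ) (hp : 2 ≤ p) (t : ℕ) (α : Fin t → ℤ)
    (hα : ∀ i, 1 ≤ α i ∧ α i ≤ p) (s : ℤ) (hs : s = (∑ i, α i) % p) :
    s * (p - s) ≤ ∑ i, α i * (p - α i) := by
  subst hs
  exact Finset.sum_emod_mul_sub_emod_le p (by omega) Finset.univ α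
    fun i _ ↦ ⟨by linarith [hα i], (hα i).2⟩

/-- For an integer `p ≥ 2` and integers `α i ∈ [1, p]`, with `s` the residue of the
sum of the `α i` modulo `p`, we have `∑ α i * (p - α i) ≥ s * (p - s)`. -/
theorem stmt_0 (p : ℤ) (hp : 2 ≤ p) (t : ℕ) (ht : 1 ≤ t) (α : Fin t → ℤ)
    (hα : ∀ i, 1 ≤ α i ∧ α i ≤ p) (s : ℤ) (hs : s = (∑ i, α i) % p) :
    s * (p - s) ≤ ∑ i, α i * (p - α i) :=
  stmt_0_general p hp t α hα s hs
end

section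
/- Let p ≥ 2 and α₁, α₂ ∈ {1, …, p} be integers, and let s₁ = (α₁ + α₂) mod p. Then α₁(p − α₁) + α₂(p − α₂) ≥ s₁(p − s₁). -/
/-!
Write `f x = x (p - x)`. Then `f x + f y - f (x + y) = 2 x y`, so `f` is subadditive on
nonnegative arguments, and `f (p - x) = f x`. If `α₁ + α₂ ≤ p` then `f s₁ = f (α₁ + α₂)` and
subadditivity applies to `α₁, α₂`; otherwise `f s₁ = f (α₁ + α₂ - p) = f ((p - α₁) + (p - α₂))`
and it applies to `p - α₁, p - α₂`.
-/

namespace Int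

theorem add_mul_sub_add_le {p x y : ℤ} (hx : 0 ≤ x) (hy : 0 ≤ y) :
    (x + y) * (p - (x + y)) ≤ x * (p - x) + y * (p - y) := by
  nlinarith [mul_nonneg hx hy]

/-- `x % p` is `x` on `[0, p)` and `0` at `x = p`, where both sides vanish. -/
theorem emod_mul_sub_emod_of_le {p x : ℤ} (hx : 0 ≤ x) (hxp : x ≤ p) :
    x % p * (p - x % p) = x * (p - x) := by
  rcases hxp.lt_or_eq with hlt | rfl
  · rw [emod_eq_of_lt hx hlt]
  · simp

end Int

theorem stmt_1_general (p α₁ α₂ s₁ : ℤ)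
    (h1 : 1 ≤ α₁) (h1' : α₁ ≤ p) (h2 : 1 ≤ α₂) (h2' : α₂ ≤ p)
    (hs : s₁ = (α₁ + α₂) % p) :
    s₁ * (p - s₁) ≤ α₁ * (p - α₁) + α₂ * (p - α₂) := by
  subst hs
  rcases le_total (α₁ + α₂) p with hle | hge
  · rw [Int.emod_mul_sub_emod_of_le (by omega) hle]
    exact Int.add_mul_sub_add_le (by omega) (by omega)
  · calc (α₁ + α₂) % p * (p - (α₁ + α₂) % p)
        = (α₁ + α₂ - p) % p * (p - (α₁ + α₂ - p) % p) := by rw [Int.sub_emod_right]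
      _ = ((p - α₁) + (p - α₂)) * (p - ((p - α₁) + (p - α₂))) := by
        rw [Int.emod_mul_sub_emod_of_le (by omega) (by omega)]; ring
      _ ≤ (p - α₁) * (p - (p - α₁)) + (p - α₂) * (p - (p - α₂)) :=
        Int.add_mul_sub_add_le (by omega) (by omega)
      _ = α₁ * (p - α₁) + α₂ * (p - α₂) := by ring

/-- For an integer `p ≥ 2` and `α₁, α₂ ∈ [1, p]`, with `s₁ = (α₁ + α₂) mod p`,
`α₁(p − α₁) + α₂(p − α₂) ≥ s₁(p − s₁)`. -/
theorem stmt_1 (p α₁ α₂ s₁ : ℤ) (hp : 2 ≤ p)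
    (h1 : 1 ≤ α₁) (h1' : α₁ ≤ p) (h2 : 1 ≤ α₂) (h2' : α₂ ≤ p)
    (hs : s₁ = (α₁ + α₂) % p) :
    s₁ * (p - s₁) ≤ α₁ * (p - α₁) + α₂ * (p - α₂) :=
  stmt_1_general p α₁ α₂ s₁ h1 h1' h2 h2' hs
end

section
/- Let n, p, x₁, …, x_t be positive integers with n = x₁ + ⋯ + x_t. Let b, b₁, …, b_t be nonnegative integers with b < p, b_i < p, b ≤ n, b_i ≤ x_i for all i, and b ≡ b₁ + ⋯ + b_t (mod p). Let q_i = (p − b_i) mod p, and set A = ∑_{i<j} x_i x_j + ∑_{i=1}^t (x_i − b_i) q_i. If b ≤ p/2, then A ≥ b(n − b). -/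
open Finset

lemma sumsq_le' {ι : Type*} (s : Finset ι) (f : ι → ℤ) (h : ∀ i ∈ s, 0 ≤ f i) :
    ∑ i ∈ s, (f i)^2 ≤ (∑ i ∈ s, f i)^2 := by
  have h1 : ∀ i ∈ s, (f i)^2 ≤ f i * ∑ j ∈ s, f j := by
    intro i hi
    have h2 : f i ≤ ∑ j ∈ s, f j := Finset.single_le_sum h hi
    nlinarith [h i hi]
  calc ∑ i ∈ s, (f i)^2 ≤ ∑ i ∈ s, f i * ∑ j ∈ s, f j := Finset.sum_le_sum h1
    _ = (∑ i ∈ s, f i)^2 := by rw [← Finset.sum_mul]; ring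

lemma two_mul_pairs {t : ℕ} (x : Fin t → ℤ) :
    2 * (∑ i, ∑ j ∈ Finset.univ.filter (fun j => i < j), x i * x j)
      = (∑ i, x i)^2 - ∑ i, (x i)^2 := by
  have h1 : (∑ i, x i)^2 = ∑ i : Fin t, ∑ j : Fin t, x i * x j := by
    rw [sq, Finset.sum_mul_sum]
  have h2 : ∀ i : Fin t, (Finset.univ.filter (fun j => ¬ i < j))
      = insert i (Finset.univ.filter (fun j : Fin t => j < i)) := by
    intro i
    ext j
    simp only [Finset.mem_filter, Finset.mem_insert, Finset.mem_univ, true_and, not_lt,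
      Fin.lt_def, Fin.le_def, Fin.ext_iff]
    omega
  have h3 : ∀ i : Fin t, (∑ j : Fin t, x i * x j)
      = (∑ j ∈ Finset.univ.filter (fun j => i < j), x i * x j)
        + (x i * x i + ∑ j ∈ Finset.univ.filter (fun j : Fin t => j < i), x i * x j) := by
    intro i
    rw [← Finset.sum_filter_add_sum_filter_not Finset.univ (fun j => i < j), h2 i,
      Finset.sum_insert (by simp)]
  have h4 : ∑ i : Fin t, ∑ j ∈ Finset.univ.filter (fun j : Fin t => j < i), x i * x j
      = ∑ i : Fin t, ∑ j ∈ Finset.univ.filter (fun j => i < j), x i * x j := by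
    have e1 : ∀ i : Fin t, ∑ j ∈ Finset.univ.filter (fun j : Fin t => j < i), x i * x j
        = ∑ j : Fin t, if j < i then x i * x j else 0 := fun i => Finset.sum_filter _ _
    rw [Finset.sum_congr rfl (fun i _ => e1 i), Finset.sum_comm]
    apply Finset.sum_congr rfl
    intro j _
    rw [← Finset.sum_filter]
    exact Finset.sum_congr rfl (fun i _ => mul_comm _ _)
  have h5 : (∑ i, x i)^2 = (∑ i, ∑ j ∈ Finset.univ.filter (fun j => i < j), x i * x j)
      + ((∑ i, x i * x i)
        + ∑ i : Fin t, ∑ j ∈ Finset.univ.filter (fun j : Fin t => j < i), x i * x j) := by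
    rw [h1, Finset.sum_congr rfl (fun i _ => h3 i), Finset.sum_add_distrib,
      Finset.sum_add_distrib]
  have h6 : ∑ i, x i * x i = ∑ i, (x i)^2 := Finset.sum_congr rfl (fun i _ => (sq (x i)).symm)
  rw [h4, h6] at h5
  linarith

/-- Proposition balancing bound, cut case (`b ≤ p/2`): `A ≥ b(n − b)`. -/
theorem stmt_2 (t : ℕ) (ht : 1 ≤ t) (n p : ℤ) (hn : 0 < n) (hp : 0 < p)
    (x : Fin t → ℤ) (hx : ∀ i, 0 < x i) (hsum : n = ∑ i, x i)
    (b : ℤ) (bi : Fin t → ℤ)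
    (hb0 : 0 ≤ b) (hbp : b < p) (hbn : b ≤ n)
    (hbi0 : ∀ i, 0 ≤ bi i) (hbip : ∀ i, bi i < p) (hbix : ∀ i, bi i ≤ x i)
    (hcong : b ≡ (∑ i, bi i) [ZMOD p])
    (q : Fin t → ℤ) (hq : ∀ i, q i = (p - bi i) % p)
    (A : ℤ)
    (hA : A = (∑ i, ∑ j ∈ Finset.univ.filter (fun j => i < j), x i * x j)
        + ∑ i, (x i - bi i) * q i)
    (hhalf : 2 * b ≤ p) :
    b * (n - b) ≤ A := by
  -- basic facts about q
  have hq0 : ∀ i, 0 ≤ q i := fun i => by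
    rw [hq i]; exact Int.emod_nonneg _ (ne_of_gt hp)
  have hq_ge : ∀ i, 2 * bi i ≤ p → bi i ≤ q i := by
    intro i h2i
    rcases (hbi0 i).eq_or_lt with h0 | h0
    · rw [hq i, ← h0]; simp
    · rw [hq i, Int.emod_eq_of_lt (by linarith [hbip i]) (by linarith)]; linarith
  have hc0 : ∀ i, 0 ≤ x i - bi i := fun i => sub_nonneg.2 (hbix i)
  -- names
  set E : ℤ := ∑ i, ∑ j ∈ Finset.univ.filter (fun j => i < j), x i * x j with hE
  set Q : ℤ := ∑ i, (x i - bi i) * q i with hQ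
  set S : ℤ := ∑ i, bi i with hS
  set C : ℤ := ∑ i, (x i - bi i) with hC
  set SB2 : ℤ := ∑ i, (bi i)^2 with hSB2
  set SC2 : ℤ := ∑ i, (x i - bi i)^2 with hSC2
  set W : ℤ := ∑ i, (x i - bi i) * (q i - bi i) with hW
  set BC : ℤ := ∑ i, (bi i) * (x i - bi i) with hBC
  set X2 : ℤ := ∑ i, (x i)^2 with hX2
  clear_value E Q S C SB2 SC2 W BC X2
  obtain ⟨k, hk⟩ : ∃ k : ℤ, S = b + p * k := by
    obtain ⟨k, hk⟩ := hcong.dvd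
    exact ⟨k, by linarith⟩
  have hS0 : 0 ≤ S := by rw [hS]; exact Finset.sum_nonneg (fun i _ => hbi0 i)
  have hk0 : 0 ≤ k := by
    by_contra hneg
    push_neg at hneg
    have : k ≤ -1 := by linarith
    have : p * k ≤ p * (-1) := mul_le_mul_of_nonneg_left this hp.le
    linarith
  -- the identity facts
  have f1 : 2 * E = n^2 - X2 := by rw [hE, hX2, hsum]; exact two_mul_pairs x
  have f2 : X2 = SB2 + 2 * BC + SC2 := by
    rw [hX2, hSB2, hBC, hSC2]
    rw [Finset.mul_sum, ← Finset.sum_add_distrib, ← Finset.sum_add_distrib]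
    exact Finset.sum_congr rfl (fun i _ => by ring)
  have f3 : W = Q - BC := by
    rw [hW, hQ, hBC, ← Finset.sum_sub_distrib]
    exact Finset.sum_congr rfl (fun i _ => by ring)
  have f4 : C = n - S := by
    rw [hC, hS, hsum, ← Finset.sum_sub_distrib]
  have f5 : S = b + p * k := hk
  have hAEQ : A = E + Q := hA
  have key : 2*A - 2*(b*(n-b))
      = (S^2 - SB2) + (C^2 - SC2) + 2*(W + p*k*C) - 2*b*(p*k) := by
    linear_combination 2*hAEQ + f1 - f2 - 2*f3 + (2*b - S - C - n)*f4 + (2*C - 2*b)*f5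
  have I1 : SC2 ≤ C^2 := by rw [hSC2, hC]; exact sumsq_le' _ _ (fun i _ => hc0 i)
  rcases hk0.eq_or_lt with hk1 | hk1
  · -- k = 0 : S = b
    have hSb : S = b := by rw [f5, ← hk1]; ring
    have I3 : SB2 ≤ S^2 := by rw [hSB2, hS]; exact sumsq_le' _ _ (fun i _ => hbi0 i)
    have I4 : 0 ≤ W := by
      rw [hW]
      apply Finset.sum_nonneg
      intro i _
      have hib : bi i ≤ S := by rw [hS]; exact Finset.single_le_sum (fun j _ => hbi0 j) (Finset.mem_univ i)
      have : bi i ≤ q i := hq_ge i (by rw [hSb] at hib; linarith)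
      exact mul_nonneg (hc0 i) (by linarith)
    have hkz : k = 0 := hk1.symm
    rw [hkz] at key
    linarith [key, I1, I3, I4]
  · -- k ≥ 1
    have hk1' : 1 ≤ k := hk1
    have hpk : p ≤ p * k := le_mul_of_one_le_right hp.le hk1'
    have I5 : 0 ≤ W + p*k*C := by
      have e : ∑ i, (x i - bi i) * (q i - bi i + p*k) = W + p*k*C := by
        rw [hW, hC, Finset.mul_sum, ← Finset.sum_add_distrib]
        exact Finset.sum_congr rfl (fun i _ => by ring)
      rw [← e]
      apply Finset.sum_nonneg
      intro i _
      exact mul_nonneg (hc0 i) (by linarith [hq0 i, hbip i])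
    have I6 : 2*b*(p*k) ≤ S^2 - SB2 := by
      obtain ⟨i₀, -, hmax⟩ := Finset.exists_max_image Finset.univ bi
        ⟨⟨0, ht⟩, Finset.mem_univ _⟩
      have hMp : bi i₀ < p := hbip i₀
      rcases le_total (bi i₀) b with hMb | hbM
      · have h1 : SB2 ≤ b * S := by
          calc SB2 ≤ ∑ i, b * bi i := by
                rw [hSB2]
                refine Finset.sum_le_sum (fun i _ => ?_)
                have h := hmax i (Finset.mem_univ i)
                nlinarith [hbi0 i]
            _ = b * S := by rw [hS, Finset.mul_sum]
        have e1 : 0 ≤ (S - b) * (S - 2*b) :=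
          mul_nonneg (by linarith) (by linarith)
        have e2 : b * (p*k) = b*S - b*b := by linear_combination (-b) * f5
        linarith [h1, e1, e2]
      · have hsplitS : bi i₀ + ∑ i ∈ Finset.univ.erase i₀, bi i = S :=
          (Finset.add_sum_erase _ bi (Finset.mem_univ i₀)).trans hS.symm
        have hsplitB : (bi i₀)^2 + ∑ i ∈ Finset.univ.erase i₀, (bi i)^2 = SB2 :=
          (Finset.add_sum_erase _ (fun i => (bi i)^2) (Finset.mem_univ i₀)).trans hSB2.symm
        set S' : ℤ := ∑ i ∈ Finset.univ.erase i₀, bi i with hS'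
        have h2 : ∑ i ∈ Finset.univ.erase i₀, (bi i)^2 ≤ S'^2 :=
          sumsq_le' _ _ (fun i _ => hbi0 i)
        have hS'b : b ≤ S' := by linarith
        have e1 : 0 ≤ (bi i₀ - b) * (S' - b) := mul_nonneg (by linarith) (by linarith)
        have e2 : b * (p*k) = b*S - b*b := by linear_combination (-b) * f5
        have e3 : S^2 = (bi i₀)^2 + 2*(bi i₀)*S' + S'^2 := by rw [← hsplitS]; ring
        have e4 : b*S = b*(bi i₀) + b*S' := by rw [← hsplitS]; ring
        linarith [h2, hsplitB, e1, e2, e3, e4]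
    linarith [key, I1, I5, I6]
end

section
/- Let n, p, x₁, …, x_t be positive integers with n = x₁ + ⋯ + x_t. Let b, b₁, …, b_t be nonnegative integers with b < p, b_i < p, b ≤ n, b_i ≤ x_i for all i, and b ≡ b₁ + ⋯ + b_t (mod p). Let q_i = (p − b_i) mod p, and set A = ∑_{i<j} x_i x_j + ∑_{i=1}^t (x_i − b_i) q_i. If b > p/2, then A ≥ (p − b)(n − b). -/
open Finset
lemma pair_expand {ι : Type*} [LinearOrder ι] (s : Finset ι) (f : ι → ℤ) :
    (∑ i ∈ s, f i) ^ 2 = (∑ i ∈ s, f i ^ 2)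
      + 2 * ∑ i ∈ s, ∑ j ∈ s.filter (fun j => i < j), f i * f j := by
  induction s using Finset.cons_induction with
  | empty => simp
  | cons a s ha ih =>
    have hfa : ∑ j ∈ (Finset.cons a s ha).filter (fun j => a < j), f a * f j
        = ∑ j ∈ s.filter (fun j => a < j), f a * f j := by
      rw [Finset.filter_cons_of_neg _ _ _ ha (lt_irrefl a)]
    have hfi : ∀ i ∈ s, ∑ j ∈ (Finset.cons a s ha).filter (fun j => i < j), f i * f j
        = (if i < a then f i * f a else 0) + ∑ j ∈ s.filter (fun j => i < j), f i * f j := by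
      intro i hi
      by_cases h : i < a
      · rw [Finset.filter_cons_of_pos _ _ _ ha h, Finset.sum_cons, if_pos h]
      · rw [Finset.filter_cons_of_neg _ _ _ ha h, if_neg h, zero_add]
    have hGL : ∑ j ∈ s.filter (fun j => a < j), f j + ∑ j ∈ s.filter (fun j => j < a), f j
        = ∑ j ∈ s, f j := by
      have h1 := Finset.sum_filter_add_sum_filter_not s (fun j => a < j) f
      have h2 : s.filter (fun j => ¬ a < j) = s.filter (fun j => j < a) := by
        apply Finset.filter_congr
        intro j hj
        have hne : j ≠ a := fun h => ha (h ▸ hj)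
        simp only [not_lt]
        exact ⟨fun h => lt_of_le_of_ne h hne, le_of_lt⟩
      rw [h2] at h1
      exact h1
    rw [Finset.sum_cons, Finset.sum_cons, Finset.sum_cons, hfa,
      Finset.sum_congr rfl hfi, Finset.sum_add_distrib, ← Finset.sum_filter]
    rw [← Finset.mul_sum, ← Finset.sum_mul]
    linear_combination ih + 2 * f a * hGL.symm

lemma exists_rep {ι : Type*} (p : ℤ) (hp : 0 < p) (s : Finset ι) (g : ι → ℤ)
    (h0 : ∀ i, 0 ≤ g i) (h1 : ∀ i, g i ≤ p) :
    ∃ r, 0 ≤ r ∧ r ≤ p ∧ p ∣ (r - ∑ i ∈ s, g i) ∧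
      r * (p - r) ≤ ∑ i ∈ s, g i * (p - g i) := by
  induction s using Finset.cons_induction with
  | empty => exact ⟨0, le_rfl, hp.le, by simp, by simp⟩
  | cons a s ha ih =>
    obtain ⟨r, hr0, hrp, ⟨m, hm⟩, hle⟩ := ih
    rw [Finset.sum_cons, Finset.sum_cons]
    by_cases h : r + g a ≤ p
    · exact ⟨r + g a, add_nonneg hr0 (h0 a), h, ⟨m, by linarith⟩,
        by nlinarith [mul_nonneg hr0 (h0 a)]⟩
    · exact ⟨r + g a - p, by linarith, by linarith [h1 a], ⟨m - 1, by linarith [hm]⟩,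
        by nlinarith [mul_nonneg (sub_nonneg.2 hrp) (sub_nonneg.2 (h1 a))]⟩

set_option maxHeartbeats 1000000 in
/-- Proposition balancing bound, merge case (`b > p/2`): `A ≥ (p − b)(n − b)`. -/
theorem stmt_3 (t : ℕ) (ht : 1 ≤ t) (n p : ℤ) (hn : 0 < n) (hp : 0 < p)
    (x : Fin t → ℤ) (hx : ∀ i, 0 < x i) (hsum : n = ∑ i, x i)
    (b : ℤ) (bi : Fin t → ℤ)
    (hb0 : 0 ≤ b) (hbp : b < p) (hbn : b ≤ n)
    (hbi0 : ∀ i, 0 ≤ bi i) (hbip : ∀ i, bi i < p) (hbix : ∀ i, bi i ≤ x i)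
    (hcong : b ≡ (∑ i, bi i) [ZMOD p])
    (q : Fin t → ℤ) (hq : ∀ i, q i = (p - bi i) % p)
    (A : ℤ)
    (hA : A = (∑ i, ∑ j ∈ Finset.univ.filter (fun j => i < j), x i * x j)
        + ∑ i, (x i - bi i) * q i)
    (hhalf : p < 2 * b) :
    (p - b) * (n - b) ≤ A := by
  have hxb : ∀ i, 0 ≤ x i - bi i := fun i => by linarith [hbix i]
  set S := ∑ i, bi i with hS
  set C := ∑ i, (x i - bi i) with hC
  set P := ∑ i, ∑ j ∈ Finset.univ.filter (fun j => i < j), x i * x j with hP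
  set Q := ∑ i, (x i - bi i) * q i with hQ
  set Sx2 := ∑ i, (x i)^2 with hSx2
  set Sbc := ∑ i, bi i * (x i - bi i) with hSbc
  set Sc2 := ∑ i, (x i - bi i)^2 with hSc2
  set Sb2 := ∑ i, (bi i)^2 with hSb2
  set F := ∑ i, bi i * (p - bi i) with hF
  obtain ⟨k, hk⟩ := Int.ModEq.dvd hcong
  have hS0 : 0 ≤ S := Finset.sum_nonneg fun i _ => hbi0 i
  have hk0 : 0 ≤ k := by
    by_contra hneg
    push_neg at hneg
    have h1 : k ≤ -1 := by linarith
    have h2 : p * k ≤ p * (-1) := mul_le_mul_of_nonneg_left h1 hp.le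
    linarith
  have hpk : 0 ≤ p * k := mul_nonneg hp.le hk0
  have hCn : C = n - S := by
    rw [hC, hS, hsum, Finset.sum_sub_distrib]
  have hn' : n = S + C := by linarith
  -- e1
  have e1 : (S + C)^2 = Sx2 + 2 * P := by
    have h := pair_expand Finset.univ x
    rw [← hsum, hn'] at h
    exact h
  -- e2
  have e2 : Sx2 = Sb2 + 2 * Sbc + Sc2 := by
    have h : ∑ i, (x i)^2
        = ∑ i, ((bi i)^2 + 2 * (bi i * (x i - bi i)) + (x i - bi i)^2) :=
      Finset.sum_congr rfl fun i _ => by ring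
    rw [Finset.sum_add_distrib, Finset.sum_add_distrib, ← Finset.mul_sum] at h
    exact h
  -- e3
  have e3 : Sc2 ≤ C * C := by
    have h : ∀ i ∈ Finset.univ, (x i - bi i)^2 ≤ (x i - bi i) * C := by
      intro i _
      have h1 : x i - bi i ≤ C := by
        rw [hC]
        exact Finset.single_le_sum (fun j _ => hxb j) (Finset.mem_univ i)
      nlinarith [hxb i]
    calc Sc2 ≤ ∑ i, (x i - bi i) * C := Finset.sum_le_sum h
      _ = C * C := by rw [← Finset.sum_mul]
  -- e4
  have e4 : Sb2 + F = p * S := by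
    have h : ∑ i, ((bi i)^2 + bi i * (p - bi i)) = ∑ i, p * bi i :=
      Finset.sum_congr rfl fun i _ => by ring
    rw [Finset.sum_add_distrib, ← Finset.mul_sum] at h
    exact h
  -- e5
  have e5 : b * (p - b) ≤ F := by
    obtain ⟨r, hr0, hrp, hrdvd, hrle⟩ :=
      exists_rep p hp Finset.univ bi hbi0 (fun i => (hbip i).le)
    rw [← hS] at hrdvd
    obtain ⟨m', hm'⟩ := hrdvd
    have hmm : r - b = p * (m' + k) := by rw [mul_add]; linarith
    have hm1 : m' + k < 2 := by
      have : p * (m' + k) < p * 2 := by linarith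
      exact lt_of_mul_lt_mul_left this hp.le
    have hm0 : -1 < m' + k := by
      have : p * (-1) < p * (m' + k) := by linarith
      exact lt_of_mul_lt_mul_left this hp.le
    have : m' + k = 0 ∨ m' + k = 1 := by omega
    rcases this with h | h
    · have : r = b := by rw [h, mul_zero] at hmm; linarith
      rw [this] at hrle
      exact hrle
    · exfalso
      rw [h, mul_one] at hmm
      linarith
  -- key
  have key : 2 * (p - b) * (S - b) ≤ S^2 - p * S + b * (p - b) := by
    have hS' : S = b + p * k := by linarith
    rw [hS']
    have hkk : 0 ≤ k * (k - 1) := by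
      rcases eq_or_lt_of_le hk0 with h | h
      · rw [← h]; simp
      · have : 1 ≤ k := h
        exact mul_nonneg hk0 (by linarith)
    nlinarith [mul_nonneg hpk (by linarith : (0:ℤ) ≤ 2 * b - p - 1),
      mul_nonneg hkk (mul_pos hp hp).le, hpk]
  -- pointwise bound and e6
  have hpw : ∀ i ∈ Finset.univ,
      (p - b) * (x i - bi i) - S * (x i - bi i) + bi i * (x i - bi i)
        ≤ (x i - bi i) * q i := by
    intro i _
    have hc := hxb i
    rcases (hbi0 i).eq_or_lt with h | h
    · have hq0 : q i = 0 := by rw [hq i, ← h, sub_zero, Int.emod_self]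
      rw [hq0, mul_zero, ← h]
      have hSpb : p - b ≤ S := by linarith
      nlinarith [mul_nonneg hc (sub_nonneg.2 hSpb)]
    · have hqv : q i = p - bi i := by
        rw [hq i]
        exact Int.emod_eq_of_lt (by linarith [hbip i]) (by linarith)
      have hbiS : bi i ≤ S := by
        rw [hS]
        exact Finset.single_le_sum (fun j _ => hbi0 j) (Finset.mem_univ i)
      have h2 : 2 * bi i ≤ b + S := by
        rcases eq_or_lt_of_le hk0 with h' | h'
        · have hpk0 : p * k = 0 := by rw [← h', mul_zero]
          linarith
        · have h1k : 1 ≤ k := h'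
          have : p ≤ p * k := le_mul_of_one_le_right hp.le h1k
          linarith [hbip i]
      rw [hqv]
      nlinarith [mul_nonneg hc (by linarith : (0:ℤ) ≤ b + S - 2 * bi i)]
  have e6 : (p - b) * C - S * C + Sbc ≤ Q := by
    have h := Finset.sum_le_sum hpw
    rw [Finset.sum_add_distrib, Finset.sum_sub_distrib, ← Finset.mul_sum,
      ← Finset.mul_sum] at h
    exact h
  -- finish
  rw [hA, hn']
  linarith [e1, e2, e3, e4, e5, e6, key]
end

section
/- Let x₁, …, x_t be nonnegative real numbers and S a nonnegative integer with S ≤ ∑_{i=1}^t x_i. Then for any nonnegative reals a₁, …, a_t, there exist nonnegative integers y₁, …, y_t satisfying: (1) y_i ≤ ⌈x_i⌉ for each i; (2) ∑_{i=1}^t y_i = S; and (3) ∑_{i=1}^t a_i y_i ≤ ∑_{i=1}^t a_i x_i. -/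
/-- Rounding lemma: given nonnegative reals `x i` and a nonnegative integer `S`
with `S ≤ ∑ x i`, for any nonnegative weights `a i` there are nonnegative integers
`y i ≤ ⌈x i⌉` with `∑ y i = S` and `∑ a i * y i ≤ ∑ a i * x i`. -/
theorem stmt_4 (t : ℕ) (x a : Fin t → ℝ) (hx : ∀ i, 0 ≤ x i) (ha : ∀ i, 0 ≤ a i)
    (S : ℕ) (hS : (S : ℝ) ≤ ∑ i, x i) :
    ∃ y : Fin t → ℕ, (∀ i, (y i : ℤ) ≤ ⌈x i⌉) ∧ (∑ i, y i = S) ∧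
      (∑ i, a i * (y i : ℝ)) ≤ ∑ i, a i * x i := by
  induction S generalizing x with
  | zero =>
    refine ⟨fun _ => 0, fun i => by simpa using Int.ceil_nonneg (hx i), by simp, ?_⟩
    simpa using Finset.sum_nonneg fun i _ => mul_nonneg (ha i) (hx i)
  | succ S ih =>
    have hS1 : (S : ℝ) + 1 ≤ ∑ j, x j := by push_cast at hS; linarith
    by_cases h1 : ∃ i, 1 ≤ x i
    · obtain ⟨i, hi⟩ := h1
      set x' : Fin t → ℝ := Function.update x i (x i - 1) with hx'def
      have hx' : ∀ j, 0 ≤ x' j := by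
        intro j
        rcases eq_or_ne j i with rfl | hj
        · simp [x']; linarith
        · simp [x', Function.update_of_ne hj]; exact hx j
      have hsplit : x i + ∑ j ∈ Finset.univ.erase i, x j = ∑ j, x j :=
        Finset.add_sum_erase _ _ (Finset.mem_univ i)
      have hsum' : ∑ j, x' j = (∑ j, x j) - 1 := by
        rw [← Finset.add_sum_erase _ x' (Finset.mem_univ i)]
        have h2 : ∑ j ∈ Finset.univ.erase i, x' j = ∑ j ∈ Finset.univ.erase i, x j :=
          Finset.sum_congr rfl fun j hj =>
            Function.update_of_ne (Finset.mem_erase.mp hj).1 _ _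
        rw [h2]
        simp only [x', Function.update_self]
        linarith
      have hS' : (S : ℝ) ≤ ∑ j, x' j := by rw [hsum']; linarith
      obtain ⟨y', hy1, hy2, hy3⟩ := ih x' hx' hS'
      refine ⟨Function.update y' i (y' i + 1), ?_, ?_, ?_⟩
      · intro j
        rcases eq_or_ne j i with rfl | hj
        · have h := hy1 j
          have hceil : ⌈x' j⌉ = ⌈x j⌉ - 1 := by
            simp only [x', Function.update_self]
            exact Int.ceil_sub_one (x j) ▸ rfl
          rw [hceil] at h
          simp only [Function.update_self]
          push_cast
          omega
        · have h := hy1 j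
          have hxj : x' j = x j := Function.update_of_ne hj _ _
          rw [hxj] at h
          simpa [Function.update_of_ne hj] using h
      · rw [Finset.sum_update_of_mem (Finset.mem_univ i)]
        have h2 : y' i + ∑ j ∈ Finset.univ.erase i, y' j = ∑ j, y' j :=
          Finset.add_sum_erase _ _ (Finset.mem_univ i)
        rw [Finset.erase_eq] at h2
        omega
      · have key : ∑ j, a j * ((Function.update y' i (y' i + 1) j : ℕ) : ℝ)
            = (∑ j, a j * (y' j : ℝ)) + a i := by
          rw [← Finset.add_sum_erase _ _ (Finset.mem_univ i),
            ← Finset.add_sum_erase _ (fun j => a j * (y' j : ℝ)) (Finset.mem_univ i)]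
          have h2 : ∑ j ∈ Finset.univ.erase i,
              a j * ((Function.update y' i (y' i + 1) j : ℕ) : ℝ)
              = ∑ j ∈ Finset.univ.erase i, a j * (y' j : ℝ) :=
            Finset.sum_congr rfl fun j hj => by
              rw [Function.update_of_ne (Finset.mem_erase.mp hj).1]
          rw [h2]
          simp only [Function.update_self]
          push_cast
          ring
        have keyx : ∑ j, a j * x' j = (∑ j, a j * x j) - a i := by
          rw [← Finset.add_sum_erase _ (fun j => a j * x' j) (Finset.mem_univ i),
            ← Finset.add_sum_erase _ (fun j => a j * x j) (Finset.mem_univ i)]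
          have h2 : ∑ j ∈ Finset.univ.erase i, a j * x' j
              = ∑ j ∈ Finset.univ.erase i, a j * x j :=
            Finset.sum_congr rfl fun j hj => by
              rw [hx'def, Function.update_of_ne (Finset.mem_erase.mp hj).1]
          rw [h2]
          simp only [x', Function.update_self]
          ring
        rw [key]
        rw [keyx] at hy3
        linarith
    · push_neg at h1
      have hex : ∃ i, 0 < x i := by
        by_contra h
        push_neg at h
        have : ∑ j, x j ≤ 0 := Finset.sum_nonpos fun j _ => h j
        linarith
      set s := Finset.univ.filter (fun j => 0 < x j) with hsdef
      have hs : s.Nonempty := by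
        obtain ⟨i, hi⟩ := hex
        exact ⟨i, by simp [s, hi]⟩
      obtain ⟨i, his, hmin⟩ := s.exists_min_image a hs
      have hxi : 0 < x i := (Finset.mem_filter.mp his).2
      set T := ∑ j, x j with hTdef
      have hD0 : 0 < T - x i := by
        have := h1 i
        have hSnn : (0:ℝ) ≤ (S:ℕ) := Nat.cast_nonneg S
        linarith
      set c := (T - 1) / (T - x i) with hcdef
      have hc0 : 0 ≤ c := div_nonneg (by linarith) hD0.le
      have hc1 : c ≤ 1 := by
        rw [hcdef, div_le_one hD0]
        linarith [h1 i]
      set x'' : Fin t → ℝ := fun j => if j = i then 0 else c * x j with hx''def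
      have hx'' : ∀ j, 0 ≤ x'' j := by
        intro j
        by_cases hj : j = i <;> simp [x'', hj]
        exact mul_nonneg hc0 (hx j)
      have hsplit : x i + ∑ j ∈ Finset.univ.erase i, x j = T :=
        Finset.add_sum_erase _ _ (Finset.mem_univ i)
      have hsum'' : ∑ j, x'' j = T - 1 := by
        have h2 : ∑ j ∈ Finset.univ.erase i, x'' j
            = c * ∑ j ∈ Finset.univ.erase i, x j := by
          rw [Finset.mul_sum]
          exact Finset.sum_congr rfl fun j hj => by
            simp [x'', (Finset.mem_erase.mp hj).1]
        have h3 : x'' i = 0 := by simp [x'']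
        have h4 := Finset.add_sum_erase Finset.univ x'' (Finset.mem_univ i)
        have h5 : ∑ j ∈ Finset.univ.erase i, x j = T - x i := by linarith [hsplit]
        rw [← h4, h3, h2, h5, hcdef]
        field_simp
        ring
      have hS' : (S : ℝ) ≤ ∑ j, x'' j := by rw [hsum'']; linarith
      obtain ⟨y', hy1, hy2, hy3⟩ := ih x'' hx'' hS'
      have hy'i : y' i = 0 := by
        have h := hy1 i
        simp [x''] at h
        omega
      refine ⟨Function.update y' i (y' i + 1), ?_, ?_, ?_⟩
      · intro j
        rcases eq_or_ne j i with rfl | hj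
        · simp only [Function.update_self, hy'i]
          exact_mod_cast Int.one_le_ceil_iff.mpr hxi
        · have h := hy1 j
          simp [Function.update_of_ne hj]
          refine le_trans h (Int.ceil_le_ceil ?_)
          have hxx : x'' j = c * x j := by simp [x'', hj]
          rw [hxx]
          nlinarith [hx j, hc1]
      · rw [Finset.sum_update_of_mem (Finset.mem_univ i)]
        have h2 : y' i + ∑ j ∈ Finset.univ.erase i, y' j = ∑ j, y' j :=
          Finset.add_sum_erase _ _ (Finset.mem_univ i)
        rw [Finset.erase_eq] at h2
        omega
      · have key : ∑ j, a j * ((Function.update y' i (y' i + 1) j : ℕ) : ℝ)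
            = (∑ j, a j * (y' j : ℝ)) + a i := by
          rw [← Finset.add_sum_erase _ _ (Finset.mem_univ i),
            ← Finset.add_sum_erase _ (fun j => a j * (y' j : ℝ)) (Finset.mem_univ i)]
          have h2 : ∑ j ∈ Finset.univ.erase i,
              a j * ((Function.update y' i (y' i + 1) j : ℕ) : ℝ)
              = ∑ j ∈ Finset.univ.erase i, a j * (y' j : ℝ) :=
            Finset.sum_congr rfl fun j hj => by
              rw [Function.update_of_ne (Finset.mem_erase.mp hj).1]
          rw [h2]
          simp only [Function.update_self]
          push_cast
          ring
        rw [key]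
        -- cost of x'': ∑ a x'' = c * E where E = ∑_{erase i} a j * x j
        set E := ∑ j ∈ Finset.univ.erase i, a j * x j with hEdef
        have hx''cost : ∑ j, a j * x'' j = c * E := by
          rw [← Finset.add_sum_erase _ (fun j => a j * x'' j) (Finset.mem_univ i)]
          have h2 : ∑ j ∈ Finset.univ.erase i, a j * x'' j = c * E := by
            rw [hEdef, Finset.mul_sum]
            exact Finset.sum_congr rfl fun j hj => by
              simp [x'', (Finset.mem_erase.mp hj).1]; ring
          rw [h2]
          simp [x'']
        have hxcost : ∑ j, a j * x j = a i * x i + E :=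
          (Finset.add_sum_erase _ (fun j => a j * x j) (Finset.mem_univ i)).symm
        have hE : a i * (T - x i) ≤ E := by
          rw [hEdef, show T - x i = ∑ j ∈ Finset.univ.erase i, x j by linarith,
            Finset.mul_sum]
          refine Finset.sum_le_sum fun j hj => ?_
          rcases lt_or_eq_of_le (hx j) with hxj | hxj
          · exact mul_le_mul_of_nonneg_right (hmin j (by simp [s, hxj])) (hx j)
          · rw [← hxj]; simp
        have hcE : (1 - c) * (a i * (T - x i)) = a i * (1 - x i) := by
          have : (1 - c) * (T - x i) = 1 - x i := by
            rw [hcdef]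
            field_simp
            ring
          calc (1 - c) * (a i * (T - x i)) = a i * ((1 - c) * (T - x i)) := by ring
            _ = a i * (1 - x i) := by rw [this]
        rw [hx''cost] at hy3
        rw [hxcost]
        have h1c : 0 ≤ 1 - c := by linarith
        have hfin : (1 - c) * (a i * (T - x i)) ≤ (1 - c) * E :=
          mul_le_mul_of_nonneg_left hE h1c
        rw [hcE] at hfin
        nlinarith [ha i, hxi, h1 i]
end

section
/- Suppose dist is a metric on a set of clusterings, F* is a fair clustering minimizing dist(D, ·) over all fair clusterings, T satisfies dist(D, T) ≤ α · dist(D, T*) where T* minimizes dist(D, ·) over a class containing all fair clusterings (so dist(D, T*) ≤ dist(D, F*)), and F satisfies dist(T, F) ≤ β · dist(T, C*) where C* minimizes dist(T, ·) over fair clusterings (so dist(T, C*) ≤ dist(T, F*)). Then dist(D, F) ≤ (α + β + αβ) · dist(D, F*). -/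
theorem stmt_5_general (X : Type*) (dist : X → X → ℝ)
    (hsymm : ∀ a b, dist a b = dist b a)
    (htri : ∀ a b c, dist a c ≤ dist a b + dist b c)
    (D T F Fstar : X) (α β : ℝ) (hβ : 1 ≤ β)
    (hT : dist D T ≤ α * dist D Fstar)
    (hF : dist T F ≤ β * dist T Fstar) :
    dist D F ≤ (α + β + α * β) * dist D Fstar := by
  have hβ₀ : 0 ≤ β := zero_le_one.trans hβ
  have hTD : dist T D ≤ α * dist D Fstar := hsymm T D ▸ hT
  calc dist D F ≤ dist D T + dist T F := htri D T F
    _ ≤ α * dist D Fstar + β * (dist T D + dist D Fstar) := by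
      gcongr
      exact hF.trans (by gcongr; exact htri T D Fstar)
    _ ≤ α * dist D Fstar + β * (α * dist D Fstar + dist D Fstar) := by gcongr
    _ = (α + β + α * β) * dist D Fstar := by ring

/-- Combining an `α`-approximate balancing step with a `β`-approximate fairing step
gives an `(α + β + αβ)`-approximation. -/
theorem stmt_5 (X : Type*) (dist : X → X → ℝ)
    (hnonneg : ∀ a b, 0 ≤ dist a b) (hsymm : ∀ a b, dist a b = dist b a)
    (htri : ∀ a b c, dist a c ≤ dist a b + dist b c)
    (D T F Fstar : X) (α β : ℝ) (hα : 1 ≤ α) (hβ : 1 ≤ β)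
    (hT : dist D T ≤ α * dist D Fstar)
    (hF : dist T F ≤ β * dist T Fstar) :
    dist D F ≤ (α + β + α * β) * dist D Fstar :=
  stmt_5_general X dist hsymm htri D T F Fstar α β hβ hT hF
end

section
/- Let ℓ ≥ 1 be a real number and dist a metric on a set X of clusterings. Let D₁, …, D_m ∈ X, F* ∈ X, and suppose there is an index i* minimizing dist(D_i, F*) over i, and F ∈ X with dist(D_{i*}, F) ≤ α · dist(D_{i*}, F*) for some α ≥ 1. Then (∑_{j=1}^m dist(D_j, F)^ℓ)^{1/ℓ} ≤ (2 + α) · (∑_{j=1}^m dist(D_j, F*)^ℓ)^{1/ℓ}. -/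
open Finset

lemma sum_rpow_rpow_one_div_le_mul {ι : Type*} [Fintype ι] {f g : ι → ℝ} {c p : ℝ}
    (hf : ∀ i, 0 ≤ f i) (hg : ∀ i, 0 ≤ g i) (hc : 0 ≤ c) (hp : 0 < p)
    (hfg : ∀ i, f i ≤ c * g i) :
    (∑ i, f i ^ p) ^ (1 / p) ≤ c * (∑ i, g i ^ p) ^ (1 / p) := by
  have hsum : ∑ i, f i ^ p ≤ c ^ p * ∑ i, g i ^ p := by
    rw [mul_sum]
    gcongr with i
    rw [← Real.mul_rpow hc (hg i)]
    exact Real.rpow_le_rpow (hf i) (hfg i) hp.le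
  calc (∑ i, f i ^ p) ^ (1 / p)
      ≤ (c ^ p * ∑ i, g i ^ p) ^ (1 / p) :=
        Real.rpow_le_rpow (sum_nonneg fun i _ => Real.rpow_nonneg (hf i) p) hsum (by positivity)
    _ = c * (∑ i, g i ^ p) ^ (1 / p) := by
        rw [Real.mul_rpow (Real.rpow_nonneg hc p) (sum_nonneg fun i _ => Real.rpow_nonneg (hg i) p),
          ← Real.rpow_mul hc, mul_one_div_cancel hp.ne', Real.rpow_one]

lemma le_two_add_mul_of_nearest {X : Type*} {d : X → X → ℝ}
    (hsymm : ∀ a b, d a b = d b a) (htri : ∀ a b c, d a c ≤ d a b + d b c)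
    {α : ℝ} (hα : 0 ≤ α) {x y c c' : X} (hnearest : d x c ≤ d y c)
    (hclose : d x c' ≤ α * d x c) :
    d y c' ≤ (2 + α) * d y c := by
  have hα_mul : α * d x c ≤ α * d y c := mul_le_mul_of_nonneg_left hnearest hα
  calc d y c' ≤ d y c + d c x + d x c' := by linarith [htri y c c', htri c x c']
    _ = d y c + d x c + d x c' := by rw [hsymm c x]
    _ ≤ (2 + α) * d y c := by linarith

/-- `(2+α)`-approximation for the `ℓ`-mean fair consensus objective. -/
theorem stmt_7 (X : Type*) (dist : X → X → ℝ)
    (hnonneg : ∀ a b, 0 ≤ dist a b) (hsymm : ∀ a b, dist a b = dist b a)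
    (htri : ∀ a b c, dist a c ≤ dist a b + dist b c)
    (ℓ : ℝ) (hℓ : 1 ≤ ℓ)
    (m : ℕ) (D : Fin m → X) (Fstar F : X) (α : ℝ) (hα : 1 ≤ α)
    (istar : Fin m) (hmin : ∀ j, dist (D istar) Fstar ≤ dist (D j) Fstar)
    (hclose : dist (D istar) F ≤ α * dist (D istar) Fstar) :
    (∑ j, dist (D j) F ^ ℓ) ^ (1 / ℓ) ≤
      (2 + α) * (∑ j, dist (D j) Fstar ^ ℓ) ^ (1 / ℓ) :=
  sum_rpow_rpow_one_div_le_mul (fun _ => hnonneg _ _) (fun _ => hnonneg _ _) (by linarith)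
    (by linarith) fun j => le_two_add_mul_of_nearest hsymm htri (by linarith) (hmin j) hclose
end
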